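/- arXiv:2105.05372 — 4 statements merged into one kernel-verified Lean document; each statement's English description precedes it below -/
import Mathlib

section
/- In the spined category Grph_m of simple graphs and graph monomorphisms (with spine the complete graphs K_n and proxy pushouts inherited from pushouts in Grph along monomorphisms), the clique-number map ω, sending a graph G to the number of vertices of its largest complete subgraph, is an S-functor: it is a functor to (ℕ, ≤) sending K_n to n and sending each proxy pushout square to a supremum. -/
open CategoryTheory


/-- A spined category: a category with a spine `Ω : ℕ → C` and a proxy pushout
operation `P`, satisfying SC1 and SC2. -/
structure SpinedStruct (C : Type*) [Category C] where
  Ω : ℕ → C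
  P : ∀ {n : ℕ} {G H : C}, (Ω n ⟶ G) → (Ω n ⟶ H) → C
  inl : ∀ {n : ℕ} {G H : C} (g : Ω n ⟶ G) (h : Ω n ⟶ H), G ⟶ P g h
  inr : ∀ {n : ℕ} {G H : C} (g : Ω n ⟶ G) (h : Ω n ⟶ H), H ⟶ P g h
  sc1 : ∀ X : C, ∃ n : ℕ, Nonempty (X ⟶ Ω n)
  sc2 : ∀ {n : ℕ} {G G' H H' : C} (g : Ω n ⟶ G) (h : Ω n ⟶ H)
      (g' : G ⟶ G') (h' : H ⟶ H'),
      ∃! m : P g h ⟶ P (g ≫ g') (h ≫ h'),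
        inl g h ≫ m = g' ≫ inl (g ≫ g') (h ≫ h') ∧
        inr g h ≫ m = h' ≫ inr (g ≫ g') (h ≫ h')

/-- An S-functor on a spined category: a spinal functor to `Nat = (ℕ, ≤)`,
equivalently a monotone-under-morphisms assignment `s : ob C → ℕ` with
`s (Ω n) = n` and `s (P g h) = max (s G) (s H)`. -/
structure SFunctor {C : Type*} [Category C] (S : SpinedStruct C) where
  s : C → ℕ
  mono : ∀ {X Y : C}, (X ⟶ Y) → s X ≤ s Y
  spine : ∀ n : ℕ, s (S.Ω n) = n
  pp : ∀ {n : ℕ} {G H : C} (g : S.Ω n ⟶ G) (h : S.Ω n ⟶ H),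
      s (S.P g h) = max (s G) (s H)

/-- An object is pseudo-chordal if all S-functors agree on it. -/
def PseudoChordal {C : Type*} [Category C] (S : SpinedStruct C) (X : C) : Prop :=
  ∀ F G : SFunctor S, F.s X = G.s X

/-- The triangulation map `Δ(G) = min { s(H) | H pseudo-chordal, C(G,H) ≠ ∅ }`. -/
noncomputable def Delta {C : Type*} [Category C] (S : SpinedStruct C)
    (s : SFunctor S) (G : C) : ℕ :=
  sInf { k | ∃ H : C, PseudoChordal S H ∧ Nonempty (G ⟶ H) ∧ s.s H = k }

/-- Bundled finite simple graphs. -/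
structure Grph : Type 1 where
  V : Type
  [fin : Fintype V]
  G : SimpleGraph V

attribute [instance] Grph.fin

/-- The category of finite simple graphs and graph homomorphisms. -/
instance : Category Grph where
  Hom A B := A.G →g B.G
  id A := SimpleGraph.Hom.id
  comp f g := g.comp f

/-- The category of finite simple graphs and graph monomorphisms. -/
def GrphM : Type 1 := Grph

instance : Category GrphM where
  Hom A B := { f : (Grph.G A) →g (Grph.G B) // Function.Injective f }
  id A := ⟨SimpleGraph.Hom.id, fun _ _ h => h⟩
  comp f g := ⟨g.1.comp f.1, g.2.comp f.2⟩

/-- The complete graph on `n` vertices, as an object of `GrphM`. -/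
def Kn (n : ℕ) : GrphM := { V := Fin n, G := (⊤ : SimpleGraph (Fin n)) }

/-- The clique number of an object of `GrphM`. -/
noncomputable def cliqueNumM (A : GrphM) : ℕ := (Grph.G A).cliqueNum

/-! A graph homomorphism is injective on cliques, so the clique number is monotone along
morphisms. For a pushout `P` of `A ← Kₙ → B`, glue `A` and `B` on the pushout of their vertex
sets, keeping exactly the edges of `A` and of `B`: this receives a cocone, hence a map from `P`.
Since the common part is complete, its inclusions are induced, and as no edge joins `A ∖ Kₙ`
to `B ∖ Kₙ`, every clique of the glued graph lies in `A` or in `B`. -/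

open Limits Finset

namespace SimpleGraph

variable {V α β : Type*}

theorem Hom.cliqueNum_le [Finite V] [Finite α] {G : SimpleGraph V} {H : SimpleGraph α}
    (f : G →g H) : G.cliqueNum ≤ H.cliqueNum := by
  classical
  obtain ⟨s, hs⟩ := G.exists_isNClique_cliqueNum
  have hinj : Set.InjOn f s := fun a ha b hb hab => by
    by_contra hne
    exact H.irrefl (hab ▸ f.map_adj (hs.isClique ha hb hne))
  have himage : H.IsClique (s.image f : Set α) := by
    rw [coe_image, IsClique, hinj.pairwise_image]
    exact hs.isClique.imp fun _ _ => f.map_adj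
  calc G.cliqueNum = #s := hs.card_eq.symm
    _ = #(s.image f) := (card_image_of_injOn hinj).symm
    _ ≤ H.cliqueNum := himage.card_le_cliqueNum

theorem cliqueNum_top [Fintype V] : (⊤ : SimpleGraph V).cliqueNum = Fintype.card V :=
  (maximumClique_card_eq_cliqueNum _
    ⟨fun _ _ _ _ => id, fun t _ => card_le_univ t⟩).symm

def Hom.toEmbeddingOfEqTop {G : SimpleGraph V} {H : SimpleGraph α} (f : G →g H)
    (hf : Function.Injective f) (hG : G = ⊤) : G ↪g H where
  toFun := f
  inj' := hf
  map_rel_iff' := ⟨fun hadj => by rw [hG]; exact hf.ne_iff.1 (H.ne_of_adj hadj), f.map_adj⟩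

section Gluing

variable {f : α ↪ V} {k : β ↪ V} {A : SimpleGraph α} {B : SimpleGraph β}

theorem IsClique.subset_range_or_subset_range (hfk : ∀ v, v ∈ Set.range f ∨ v ∈ Set.range k)
    {s : Set V} (hs : (A.map f ⊔ B.map k).IsClique s) :
    s ⊆ Set.range f ∨ s ⊆ Set.range k := by
  by_contra! hcon
  obtain ⟨⟨p, hp, hpf⟩, ⟨q, hq, hqk⟩⟩ := And.imp Set.not_subset.1 Set.not_subset.1 hcon
  have hpq : p ≠ q := by
    rintro rfl
    exact (hfk p).elim hpf hqk
  have hadj := hs hp hq hpq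
  rw [sup_adj, map_adj, map_adj] at hadj
  rcases hadj with ⟨a, -, -, rfl, -⟩ | ⟨-, b, -, -, rfl⟩
  · exact hpf ⟨a, rfl⟩
  · exact hqk ⟨b, rfl⟩

theorem IsClique.card_le_cliqueNum_of_comap_le [Finite α] {G : SimpleGraph V} {s : Finset V}
    (hs : G.IsClique s) (hsf : ↑s ⊆ Set.range f) (hG : G.comap f ≤ A) :
    #s ≤ A.cliqueNum := by
  classical
  have hclique : A.IsClique (s.preimage f f.injective.injOn : Set α) := fun a ha a' ha' hne =>
    hG (hs (mem_preimage.1 ha) (mem_preimage.1 ha') (f.injective.ne hne))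
  calc #s = #(s.preimage f f.injective.injOn) := by
        rw [card_preimage, filter_true_of_mem fun v hv => hsf hv]
    _ ≤ A.cliqueNum := hclique.card_le_cliqueNum

theorem cliqueNum_sup_map_le [Finite V] [Finite α] [Finite β]
    (hfk : ∀ v, v ∈ Set.range f ∨ v ∈ Set.range k)
    (hA : (B.map k).comap f ≤ A) (hB : (A.map f).comap k ≤ B) :
    (A.map f ⊔ B.map k).cliqueNum ≤ max A.cliqueNum B.cliqueNum := by
  obtain ⟨s, hs⟩ := (A.map f ⊔ B.map k).exists_isNClique_cliqueNum
  rw [← hs.card_eq]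
  rcases hs.isClique.subset_range_or_subset_range hfk with hsf | hsk
  · refine le_max_of_le_left (hs.isClique.card_le_cliqueNum_of_comap_le hsf ?_)
    rintro a a' (hadj | hadj)
    · exact (map_adj_apply (f := f)).1 hadj
    · exact hA hadj
  · refine le_max_of_le_right (hs.isClique.card_le_cliqueNum_of_comap_le hsk ?_)
    rintro b b' (hadj | hadj)
    · exact hB hadj
    · exact (map_adj_apply (f := k)).1 hadj

end Gluing

end SimpleGraph

namespace CategoryTheory.Limits.Types.Pushout

universe u

variable {ι α β : Type u} {g : ι → α} {h : ι → β}

theorem inl_injective (hh : Function.Injective h) : Function.Injective (inl (↾g) (↾h)) := by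
  have : Mono (↾h) := (mono_iff_injective _).2 hh
  exact (mono_iff_injective _).1 inferInstance

theorem inr_injective (hg : Function.Injective g) : Function.Injective (inr (↾g) (↾h)) := by
  have : Mono (↾g) := (mono_iff_injective _).2 hg
  exact (mono_iff_injective _).1 inferInstance

theorem exists_of_inl_eq_inr (hg : Function.Injective g) {a : α} {b : β}
    (hab : inl (↾g) (↾h) a = inr (↾g) (↾h) b) : ∃ x, g x = a ∧ h x = b := by
  have : Mono (↾g) := (mono_iff_injective _).2 hg
  exact (inl_eq_inr_iff _ _ a b).1 hab

theorem mem_range_inl_or_mem_range_inr (v : Pushout (↾g) (↾h)) :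
    v ∈ Set.range (inl (↾g) (↾h)) ∨ v ∈ Set.range (inr (↾g) (↾h)) := by
  obtain ⟨a | b⟩ := v
  · exact Or.inl ⟨a, rfl⟩
  · exact Or.inr ⟨b, rfl⟩

def inlEmbedding (hh : Function.Injective h) : α ↪ Pushout (↾g) (↾h) :=
  ⟨inl (↾g) (↾h), inl_injective hh⟩

def inrEmbedding (hg : Function.Injective g) : β ↪ Pushout (↾g) (↾h) :=
  ⟨inr (↾g) (↾h), inr_injective hg⟩

instance [Finite α] [Finite β] : Finite (Pushout (↾g) (↾h)) := Quot.finite _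

end CategoryTheory.Limits.Types.Pushout

namespace Grph

open SimpleGraph Types.Pushout

variable {C A B : Grph} (g : C.G ↪g A.G) (h : C.G ↪g B.G)

noncomputable def glue : Grph where
  V := Types.Pushout (↾g) (↾h)
  fin := Fintype.ofFinite _
  G := A.G.map (inlEmbedding h.injective) ⊔ B.G.map (inrEmbedding g.injective)

def glueInl : A.G →g (glue g h).G :=
  (Hom.ofLE le_sup_left).comp (Embedding.map _ A.G).toHom

def glueInr : B.G →g (glue g h).G :=
  (Hom.ofLE le_sup_right).comp (Embedding.map _ B.G).toHom

theorem glue_condition : (glueInl g h).comp g.toHom = (glueInr g h).comp h.toHom :=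
  RelHom.ext fun x => by
    show inl (↾g) (↾h) (g x) = inr (↾g) (↾h) (h x)
    exact ConcreteCategory.congr_hom (condition (↾g) (↾h)) x

theorem cliqueNum_glue_le :
    (glue g h).G.cliqueNum ≤ max A.G.cliqueNum B.G.cliqueNum := by
  refine cliqueNum_sup_map_le mem_range_inl_or_mem_range_inr ?_ ?_
  · intro a a' hmap
    obtain ⟨b, b', hadj, hba, hba'⟩ := (map_adj _ _ _ _).1 hmap
    obtain ⟨x, rfl, rfl⟩ := exists_of_inl_eq_inr g.injective hba.symm
    obtain ⟨x', rfl, rfl⟩ := exists_of_inl_eq_inr g.injective hba'.symm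
    exact g.map_adj_iff.2 (h.map_adj_iff.1 hadj)
  · intro b b' hmap
    obtain ⟨a, a', hadj, hab, hab'⟩ := (map_adj _ _ _ _).1 hmap
    obtain ⟨x, rfl, rfl⟩ := exists_of_inl_eq_inr g.injective hab
    obtain ⟨x', rfl, rfl⟩ := exists_of_inl_eq_inr g.injective hab'
    exact h.map_adj_iff.2 (g.map_adj_iff.1 hadj)

theorem cliqueNum_le_max_of_isPushout {P : Grph} {i : A ⟶ P} {j : B ⟶ P}
    (hP : IsPushout (C := Grph) g.toHom h.toHom i j) :
    P.G.cliqueNum ≤ max A.G.cliqueNum B.G.cliqueNum :=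
  (SimpleGraph.Hom.cliqueNum_le (hP.desc (glueInl g h) (glueInr g h) (glue_condition g h))).trans
    (cliqueNum_glue_le g h)

end Grph

instance (X : GrphM) : Fintype (Grph.V X) := Grph.fin X

/-- In `Grph_m` (spine the complete graphs, proxy pushouts the pushouts
computed in `Grph`), the clique number is an S-functor. -/
theorem cliqueNum_sFunctor (S : SpinedStruct GrphM)
    (hΩ : ∀ n : ℕ, S.Ω n = Kn n)
    (hP : ∀ {n : ℕ} {A B : GrphM} (g : S.Ω n ⟶ A) (h : S.Ω n ⟶ B),
      IsPushout (C := Grph) g.1 h.1 (S.inl g h).1 (S.inr g h).1) :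
    ∃ F : SFunctor S, F.s = cliqueNumM := by
  have hΩ_top : ∀ n, (S.Ω n).G = ⊤ := fun n => by rw [hΩ]; rfl
  refine ⟨⟨cliqueNumM, fun f => SimpleGraph.Hom.cliqueNum_le f.1, fun n => ?_, fun g h => ?_⟩,
    rfl⟩
  · rw [hΩ]
    exact (SimpleGraph.cliqueNum_top (V := Fin n)).trans (Fintype.card_fin n)
  · exact le_antisymm
      (Grph.cliqueNum_le_max_of_isPushout (g.1.toEmbeddingOfEqTop g.2 (hΩ_top _))
        (h.1.toEmbeddingOfEqTop h.2 (hΩ_top _)) (hP g h))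
      (max_le (SimpleGraph.Hom.cliqueNum_le (S.inl g h).1)
        (SimpleGraph.Hom.cliqueNum_le (S.inr g h).1))
end

section
/- Let C be a measurable spined category with S-functor s. Define Δ(G) = min { s(H) | H pseudo-chordal in C and C(G,H) ≠ ∅ }. Then Δ is well-defined (the set is nonempty) and Δ does not depend on the choice of S-functor s. -/
open CategoryTheory


/-- `Δ` is well-defined (the defining set is nonempty) and does not depend on
the choice of S-functor. -/
theorem delta_wellDefined {C : Type*} [Category C] {S : SpinedStruct C}
    (s : SFunctor S) :
    (∀ G : C, { k | ∃ H : C, PseudoChordal S H ∧ Nonempty (G ⟶ H) ∧ s.s H = k }.Nonempty) ∧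
    ∀ s' : SFunctor S, Delta S s = Delta S s' := by
  constructor
  · intro G
    obtain ⟨n, ⟨f⟩⟩ := S.sc1 G
    exact ⟨s.s (S.Ω n), S.Ω n, fun F G => by rw [F.spine, G.spine], ⟨f⟩, rfl⟩
  · intro s'
    funext G
    unfold Delta
    congr 1
    ext k
    constructor
    · rintro ⟨H, hpc, hne, rfl⟩
      exact ⟨H, hpc, hne, (hpc s' s).symm ▸ rfl⟩
    · rintro ⟨H, hpc, hne, rfl⟩
      exact ⟨H, hpc, hne, hpc s s'⟩
end

section
/- Let C be a measurable spined category with S-functor s, and Δ(G) = min { s(H) | H pseudo-chordal, C(G,H) ≠ ∅ }. Then Δ dominates every S-functor: for every object X and every S-functor F on C, F(X) ≤ Δ(X). -/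
open CategoryTheory


/-- `Δ` dominates every S-functor. -/
theorem delta_dominates {C : Type*} [Category C] {S : SpinedStruct C}
    (s : SFunctor S) (F : SFunctor S) (X : C) :
    F.s X ≤ Delta S s X := by
  apply le_csInf
  · obtain ⟨n, ⟨f⟩⟩ := S.sc1 X
    exact ⟨n, S.Ω n, fun F G => by rw [F.spine, G.spine], ⟨f⟩, s.spine n⟩
  · rintro k ⟨H, hpc, ⟨f⟩, rfl⟩
    calc F.s X ≤ F.s H := F.mono f
    _ = s.s H := hpc F s
end

section
/- Let C be a measurable spined category with S-functor s. The map Δ(G) = min { s(H) | H pseudo-chordal, C(G,H) ≠ ∅ } satisfies Δ(Ω_n) = n for all n, i.e., Δ preserves the spine. -/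
open CategoryTheory


/-- `Δ` preserves the spine: `Δ (Ω n) = n`. -/
theorem delta_spine {C : Type*} [Category C] {S : SpinedStruct C}
    (s : SFunctor S) (n : ℕ) :
    Delta S s (S.Ω n) = n := by
  have hmem : n ∈ { k | ∃ H : C, PseudoChordal S H ∧ Nonempty (S.Ω n ⟶ H) ∧ s.s H = k } :=
    ⟨S.Ω n, fun F G => by rw [F.spine, G.spine], ⟨𝟙 _⟩, s.spine n⟩
  refine le_antisymm (Nat.sInf_le hmem) (le_csInf ⟨n, hmem⟩ ?_)
  rintro k ⟨H, _, ⟨f⟩, rfl⟩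
  calc n = s.s (S.Ω n) := (s.spine n).symm
    _ ≤ s.s H := s.mono f
end
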